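/- For every x ∈ X and every continuous compactly supported f : ℝ² → C(X), the integral operator K_x(f) on L²(ℝ²; ℂ) with kernel k(g,g') = f(g'−g)(g·x) is a bounded operator, with operator norm at most the L¹ bound ‖K_x(f)‖ ≤ ∫_{ℝ²} ‖f(g)‖_{C(X)} dg, where ‖·‖_{C(X)} is the sup norm. -/

import Mathlib

/-!
The kernel `k(g, g') = f(g' - g)(g • x)` is dominated by `‖f(g' - g)‖`, so by translation
invariance of Lebesgue measure all its row and column integrals are at most `‖f‖₁`. The Schur test
then bounds the `L²` operator norm by `√(‖f‖₁ · ‖f‖₁)`: Cauchy–Schwarz with weight `|k(g, ·)|`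
gives `|∫ k(g, g') u(g') dg'|² ≤ ‖f‖₁ ∫ |k(g, g')| |u(g')|² dg'`, and integrating in `g`
(Tonelli) costs another factor `‖f‖₁`. Integrability of `k(g, ·) u` for almost every `g`, which
linearity needs, comes out of the same estimate.
-/

open MeasureTheory Function
open scoped ENNReal NNReal

section CauchySchwarz

variable {α : Type*} [MeasurableSpace α] {μ : Measure α}

theorem sq_lintegral_mul_le {w u : α → ℝ≥0∞} (hw : AEMeasurable w μ) (hu : AEMeasurable u μ) :
    (∫⁻ a, w a * u a ∂μ) ^ 2 ≤ (∫⁻ a, w a ∂μ) * ∫⁻ a, w a * u a ^ 2 ∂μ := by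
  have hhalf : ((2 : ℕ) : ℝ)⁻¹ + ((2 : ℕ) : ℝ)⁻¹ = 1 := by norm_num
  have holder := ENNReal.lintegral_mul_norm_pow_le hw (hw.mul (hu.pow_const 2))
    (by positivity) (by positivity) hhalf
  have split : ∀ a, w a ^ ((2 : ℕ) : ℝ)⁻¹ * (w a * u a ^ 2) ^ ((2 : ℕ) : ℝ)⁻¹ = w a * u a := by
    intro a
    rw [ENNReal.mul_rpow_of_nonneg _ _ (by positivity), ENNReal.pow_rpow_inv_natCast two_ne_zero,
      ← mul_assoc, ← ENNReal.rpow_add_of_nonneg _ _ (by positivity) (by positivity), hhalf,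
      ENNReal.rpow_one]
  calc (∫⁻ a, w a * u a ∂μ) ^ 2
      ≤ ((∫⁻ a, w a ∂μ) ^ ((2 : ℕ) : ℝ)⁻¹ * (∫⁻ a, w a * u a ^ 2 ∂μ) ^ ((2 : ℕ) : ℝ)⁻¹) ^ 2 := by
        simp_rw [← split]
        gcongr
        exact holder
    _ = (∫⁻ a, w a ∂μ) * ∫⁻ a, w a * u a ^ 2 ∂μ := by
        rw [mul_pow, ENNReal.rpow_inv_natCast_pow two_ne_zero,
          ENNReal.rpow_inv_natCast_pow two_ne_zero]

end CauchySchwarz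

section Schur

variable {α β : Type*} [MeasurableSpace α] [MeasurableSpace β] {μ : Measure α} {ν : Measure β}
  [SFinite μ] [SFinite ν]

theorem lintegral_sq_lintegral_kernel_mul_le {κ : α → β → ℝ≥0∞}
    (hκ : AEMeasurable (uncurry κ) (μ.prod ν)) {A B : ℝ≥0∞}
    (hrow : ∀ a, ∫⁻ b, κ a b ∂ν ≤ A) (hcol : ∀ b, ∫⁻ a, κ a b ∂μ ≤ B)
    {u : β → ℝ≥0∞} (hu : AEMeasurable u ν) :
    ∫⁻ a, (∫⁻ b, κ a b * u b ∂ν) ^ 2 ∂μ ≤ A * B * ∫⁻ b, u b ^ 2 ∂ν := by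
  have hrows : ∀ᵐ a ∂μ, AEMeasurable (κ a) ν := by
    filter_upwards [hκ.aestronglyMeasurable.prodMk_left] with a ha using ha.aemeasurable
  have hcols : ∀ᵐ b ∂ν, AEMeasurable (κ · b) μ := by
    filter_upwards [hκ.aestronglyMeasurable.prodMk_right] with b hb using hb.aemeasurable
  calc ∫⁻ a, (∫⁻ b, κ a b * u b ∂ν) ^ 2 ∂μ
      ≤ ∫⁻ a, A * ∫⁻ b, κ a b * u b ^ 2 ∂ν ∂μ := by
        refine lintegral_mono_ae ?_
        filter_upwards [hrows] with a ha
        exact (sq_lintegral_mul_le ha hu).trans (by gcongr; exact hrow a)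
    _ = A * ∫⁻ b, (∫⁻ a, κ a b ∂μ) * u b ^ 2 ∂ν := by
        have hκu : AEMeasurable (fun p : α × β ↦ κ p.1 p.2 * u p.2 ^ 2) (μ.prod ν) :=
          hκ.mul (hu.pow_const 2).comp_snd
        rw [lintegral_const_mul'' _ hκu.lintegral_prod_right', lintegral_lintegral_swap hκu]
        congr 1
        refine lintegral_congr_ae ?_
        filter_upwards [hcols] with b hb using lintegral_mul_const'' _ hb
    _ ≤ A * ∫⁻ b, B * u b ^ 2 ∂ν := by
        gcongr with b
        exact hcol b
    _ = A * B * ∫⁻ b, u b ^ 2 ∂ν := by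
        rw [lintegral_const_mul'' _ (hu.pow_const 2), mul_assoc]

end Schur

theorem sq_eLpNorm_two {α E : Type*} [MeasurableSpace α] {μ : Measure α} [NormedAddCommGroup E]
    (f : α → E) : eLpNorm f 2 μ ^ 2 = ∫⁻ a, ‖f a‖ₑ ^ 2 ∂μ := by
  simpa [ENNReal.rpow_two] using
    eLpNorm_nnreal_pow_eq_lintegral (f := f) (μ := μ) (p := 2) two_ne_zero

theorem integral_kernel_mul_smul {𝕜 α β : Type*} [RCLike 𝕜] [MeasurableSpace β] {ν : Measure β}
    (k : α → β → 𝕜) (c : 𝕜) (u : Lp 𝕜 2 ν) :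
    (fun a ↦ ∫ b, k a b * (c • u : Lp 𝕜 2 ν) b ∂ν) = c • fun a ↦ ∫ b, k a b * u b ∂ν := by
  ext a
  rw [Pi.smul_apply, ← integral_smul]
  refine integral_congr_ae ?_
  filter_upwards [Lp.coeFn_smul c u] with b hb
  rw [hb, Pi.smul_apply, smul_eq_mul, smul_eq_mul, mul_left_comm]

section IntegralOperator

variable {𝕜 α β : Type*} [RCLike 𝕜] [MeasurableSpace α] [MeasurableSpace β]
  {μ : Measure α} {ν : Measure β} [SFinite μ] [SFinite ν]
  {k : α → β → 𝕜} (hk : AEStronglyMeasurable (uncurry k) (μ.prod ν)) {A B : ℝ≥0}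
  (hrow : ∀ a, ∫⁻ b, ‖k a b‖ₑ ∂ν ≤ A) (hcol : ∀ b, ∫⁻ a, ‖k a b‖ₑ ∂μ ≤ B)
include hk hrow hcol

theorem lintegral_sq_lintegral_enorm_kernel_mul_le {u : β → 𝕜} (hu : AEStronglyMeasurable u ν) :
    ∫⁻ a, (∫⁻ b, ‖k a b‖ₑ * ‖u b‖ₑ ∂ν) ^ 2 ∂μ ≤ A * B * ∫⁻ b, ‖u b‖ₑ ^ 2 ∂ν :=
  lintegral_sq_lintegral_kernel_mul_le hk.enorm hrow hcol hu.enorm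

theorem eLpNorm_integral_kernel_mul_le {u : β → 𝕜} (hu : AEStronglyMeasurable u ν) :
    eLpNorm (fun a ↦ ∫ b, k a b * u b ∂ν) 2 μ ≤ NNReal.sqrt (A * B) * eLpNorm u 2 ν := by
  rw [← ENNReal.pow_le_pow_left_iff two_ne_zero, mul_pow, sq_eLpNorm_two, sq_eLpNorm_two,
    ← ENNReal.coe_pow, NNReal.sq_sqrt, ENNReal.coe_mul]
  refine le_trans (lintegral_mono fun a ↦ ?_)
    (lintegral_sq_lintegral_enorm_kernel_mul_le hk hrow hcol hu)
  gcongr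
  simpa only [enorm_mul] using enorm_integral_le_lintegral_enorm (fun b ↦ k a b * u b)

theorem memLp_integral_kernel_mul {u : β → 𝕜} (hu : MemLp u 2 ν) :
    MemLp (fun a ↦ ∫ b, k a b * u b ∂ν) 2 μ :=
  ⟨(hk.mul hu.1.comp_snd).integral_prod_right',
    (eLpNorm_integral_kernel_mul_le hk hrow hcol hu.1).trans_lt
      (ENNReal.mul_lt_top ENNReal.coe_lt_top hu.2)⟩

theorem ae_integrable_kernel_mul {u : β → 𝕜} (hu : MemLp u 2 ν) :
    ∀ᵐ a ∂μ, Integrable (fun b ↦ k a b * u b) ν := by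
  have hfin : ∫⁻ a, (∫⁻ b, ‖k a b‖ₑ * ‖u b‖ₑ ∂ν) ^ 2 ∂μ ≠ ∞ := by
    refine ((lintegral_sq_lintegral_enorm_kernel_mul_le hk hrow hcol hu.1).trans_lt ?_).ne
    rw [← sq_eLpNorm_two]
    exact ENNReal.mul_lt_top ENNReal.coe_lt_top (ENNReal.pow_lt_top hu.2)
  have hmeas : AEMeasurable (fun a ↦ (∫⁻ b, ‖k a b‖ₑ * ‖u b‖ₑ ∂ν) ^ 2) μ :=
    ((hk.enorm.mul hu.1.enorm.comp_snd).lintegral_prod_right').pow_const 2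
  filter_upwards [ae_lt_top' hmeas hfin, hk.prodMk_left] with a hfin_a hk_a
  refine ⟨hk_a.mul hu.1, ?_⟩
  simp only [HasFiniteIntegral, enorm_mul]
  simpa [ENNReal.pow_lt_top_iff] using hfin_a

theorem integral_kernel_mul_add_ae (u v : Lp 𝕜 2 ν) :
    (fun a ↦ ∫ b, k a b * (u + v : Lp 𝕜 2 ν) b ∂ν) =ᵐ[μ]
      (fun a ↦ ∫ b, k a b * u b ∂ν) + fun a ↦ ∫ b, k a b * v b ∂ν := by
  filter_upwards [ae_integrable_kernel_mul hk hrow hcol (Lp.memLp u),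
    ae_integrable_kernel_mul hk hrow hcol (Lp.memLp v)] with a hu hv
  rw [Pi.add_apply, ← integral_add hu hv]
  refine integral_congr_ae ?_
  filter_upwards [Lp.coeFn_add u v] with b hb
  rw [hb, Pi.add_apply, mul_add]

noncomputable def integralOperatorL2 : Lp 𝕜 2 ν →L[𝕜] Lp 𝕜 2 μ :=
  LinearMap.mkContinuous
    { toFun u := (memLp_integral_kernel_mul hk hrow hcol (Lp.memLp u)).toLp _
      map_add' u v := by
        rw [← MemLp.toLp_add]
        exact MemLp.toLp_congr _ _ (integral_kernel_mul_add_ae hk hrow hcol u v)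
      map_smul' c u := by
        rw [RingHom.id_apply, ← MemLp.toLp_const_smul]
        exact MemLp.toLp_congr _ _ (by rw [integral_kernel_mul_smul]) }
    (NNReal.sqrt (A * B)) fun u ↦ by
      rw [LinearMap.coe_mk, AddHom.coe_mk, Lp.norm_toLp, Lp.norm_def, ← ENNReal.coe_toReal,
        ← ENNReal.toReal_mul]
      exact ENNReal.toReal_mono (ENNReal.mul_ne_top ENNReal.coe_ne_top (Lp.eLpNorm_ne_top u))
        (eLpNorm_integral_kernel_mul_le hk hrow hcol (Lp.aestronglyMeasurable u))

theorem integralOperatorL2_ae_eq (u : Lp 𝕜 2 ν) :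
    integralOperatorL2 hk hrow hcol u =ᵐ[μ] fun a ↦ ∫ b, k a b * u b ∂ν :=
  MemLp.coeFn_toLp (memLp_integral_kernel_mul hk hrow hcol (Lp.memLp u))

theorem norm_integralOperatorL2_le : ‖integralOperatorL2 hk hrow hcol‖ ≤ NNReal.sqrt (A * B) :=
  LinearMap.mkContinuous_norm_le _ (NNReal.coe_nonneg _) _

end IntegralOperator

theorem crossRep_bounded_general
    {X : Type*} [TopologicalSpace X] [CompactSpace X]
    (act : ℝ × ℝ → X → X)
    (hcont : Continuous fun p : (ℝ × ℝ) × X => act p.1 p.2)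
    (x : X)
    (f : ℝ × ℝ → C(X, ℂ)) (hf : Continuous f) (hfs : HasCompactSupport f) :
    ∃ K : Lp ℂ 2 (volume : Measure (ℝ × ℝ)) →L[ℂ] Lp ℂ 2 (volume : Measure (ℝ × ℝ)),
      (∀ u : Lp ℂ 2 (volume : Measure (ℝ × ℝ)),
        ∀ᵐ g : ℝ × ℝ, (K u : ℝ × ℝ → ℂ) g = ∫ g' : ℝ × ℝ, f (g' - g) (act g x) * u g') ∧
      ‖K‖ ≤ ∫ g : ℝ × ℝ, ‖f g‖ := by
  set k : ℝ × ℝ → ℝ × ℝ → ℂ := fun g g' ↦ f (g' - g) (act g x)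
  have hk : AEStronglyMeasurable (uncurry k) (volume.prod volume) :=
    (by fun_prop : Continuous (uncurry k)).aestronglyMeasurable
  have hdom : ∀ g g', ‖k g g'‖ₑ ≤ ‖f (g' - g)‖ₑ := fun g g' ↦ by
    simpa only [enorm_le_iff_norm_le] using (f (g' - g)).norm_coe_le_norm (act g x)
  set C : ℝ≥0 := (∫ g, ‖f g‖).toNNReal
  have hL1 : ∫⁻ g, ‖f g‖ₑ = C :=
    (ofReal_integral_norm_eq_lintegral_enorm (hf.integrable_of_hasCompactSupport hfs)).symm
  have hrow : ∀ g, ∫⁻ g', ‖k g g'‖ₑ ≤ C := fun g ↦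
    (lintegral_mono (hdom g)).trans_eq ((lintegral_sub_right_eq_self _ g).trans hL1)
  have hcol : ∀ g', ∫⁻ g, ‖k g g'‖ₑ ≤ C := fun g' ↦
    (lintegral_mono fun g ↦ hdom g g').trans_eq ((lintegral_sub_left_eq_self _ g').trans hL1)
  refine ⟨integralOperatorL2 hk hrow hcol, integralOperatorL2_ae_eq hk hrow hcol, ?_⟩
  calc ‖integralOperatorL2 hk hrow hcol‖ ≤ NNReal.sqrt (C * C) := norm_integralOperatorL2_le ..
    _ = ∫ g, ‖f g‖ := by
      rw [NNReal.sqrt_mul_self, Real.coe_toNNReal _ (integral_nonneg fun _ ↦ norm_nonneg _)]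

/-- for every `x ∈ X` and every continuous compactly supported
`f : ℝ² → C(X)`, the integral operator on `L²(ℝ²;ℂ)` with kernel
`k(g,g') = f(g'−g)(g·x)` is bounded, with `‖K_x(f)‖ ≤ ∫ ‖f(g)‖_{C(X)} dg`. -/
theorem crossRep_bounded
    {X : Type*} [TopologicalSpace X] [CompactSpace X] [T2Space X]
    (act : ℝ × ℝ → X → X)
    (hact0 : ∀ x, act 0 x = x)
    (hactadd : ∀ g g' x, act (g + g') x = act g (act g' x))
    (hcont : Continuous fun p : (ℝ × ℝ) × X => act p.1 p.2)
    (x : X)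
    (f : ℝ × ℝ → C(X, ℂ)) (hf : Continuous f) (hfs : HasCompactSupport f) :
    ∃ K : Lp ℂ 2 (volume : Measure (ℝ × ℝ)) →L[ℂ] Lp ℂ 2 (volume : Measure (ℝ × ℝ)),
      (∀ u : Lp ℂ 2 (volume : Measure (ℝ × ℝ)),
        ∀ᵐ g : ℝ × ℝ, (K u : ℝ × ℝ → ℂ) g = ∫ g' : ℝ × ℝ, f (g' - g) (act g x) * u g') ∧
      ‖K‖ ≤ ∫ g : ℝ × ℝ, ‖f g‖ :=
  crossRep_bounded_general act hcont x f hf hfs
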